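/- Let μ, r ∈ ℝ and σ > 0. For u > 0, x ∈ (0,1), z ∈ ℝ, set A(u,z) := exp((μ − r − σ²/2)·u + σ·√u·z) and Y(u,x,z) := x·A(u,z)/(x·A(u,z) + 1 − x), and let γ denote the standard Gaussian measure on ℝ (mean 0, variance 1). Then for every x ∈ (0,1), lim_{u→0+} (1/√u) ∫_ℝ |Y(u,x,z) − x| dγ(z) = σ·√(2/π)·x·(1−x). -/

import Mathlib

open Set MeasureTheory ProbabilityTheory Filter

/-- The stochastic exponential factor `A(u,z) = exp((μ-r-σ²/2)u + σ√u z)`. -/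
noncomputable def stochExp (μ r σ u z : ℝ) : ℝ :=
  Real.exp ((μ - r - σ^2 / 2) * u + σ * Real.sqrt u * z)

/-- The uncontrolled wealth fraction `Y(u,x,z) = x A / (x A + 1 - x)`. -/
noncomputable def wealthFrac (μ r σ u x z : ℝ) : ℝ :=
  x * stochExp μ r σ u z / (x * stochExp μ r σ u z + 1 - x)

open Real

section Aux

lemma myAbsExp (t : ℝ) : |Real.exp t - 1| ≤ |t| * Real.exp |t| := by
  rcases le_or_gt 0 t with ht | ht
  · rw [abs_of_nonneg (by nlinarith [Real.one_le_exp ht] : (0:ℝ) ≤ Real.exp t - 1),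
      abs_of_nonneg ht]
    have h1 := Real.add_one_le_exp (-t)
    have h2 : Real.exp (-t) * Real.exp t = 1 := by
      rw [← Real.exp_add]; simp
    nlinarith [mul_le_mul_of_nonneg_right h1 (Real.exp_pos t).le]
  · have h0 : Real.exp t < 1 := Real.exp_lt_one_iff.mpr ht
    rw [abs_of_neg (by linarith), abs_of_neg ht]
    have h1 := Real.add_one_le_exp t
    have h2 : (1:ℝ) ≤ Real.exp (-t) := Real.one_le_exp (by linarith)
    nlinarith

lemma gauss_int_eq (g : ℝ → ℝ) :
    ∫ z, g z ∂(gaussianReal 0 1) = ∫ z, gaussianPDFReal 0 1 z * g z := by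
  rw [gaussianReal_of_var_ne_zero _ one_ne_zero]
  have hpdf : gaussianPDF 0 1 = fun x => ((gaussianPDFReal 0 1 x).toNNReal : ENNReal) := rfl
  rw [hpdf, integral_withDensity_eq_integral_smul
    ((measurable_gaussianPDFReal 0 1).real_toNNReal) g]
  congr 1; ext z
  simp [NNReal.smul_def, Real.coe_toNNReal _ (gaussianPDFReal_nonneg 0 1 z)]

lemma gauss_integrable_iff (g : ℝ → ℝ) :
    Integrable g (gaussianReal 0 1) ↔
      Integrable (fun z => gaussianPDFReal 0 1 z * g z) volume := by
  rw [gaussianReal_of_var_ne_zero _ one_ne_zero]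
  have hpdf : gaussianPDF 0 1 = fun x => ((gaussianPDFReal 0 1 x).toNNReal : ENNReal) := rfl
  rw [hpdf, integrable_withDensity_iff_integrable_smul
    ((measurable_gaussianPDFReal 0 1).real_toNNReal)]
  constructor <;> intro h <;> refine h.congr (ae_of_all _ fun z => ?_) <;>
    simp [NNReal.smul_def, Real.coe_toNNReal _ (gaussianPDFReal_nonneg 0 1 z)]

lemma pdf_eq (z : ℝ) :
    gaussianPDFReal 0 1 z = (Real.sqrt (2 * π))⁻¹ * Real.exp (-(1/2) * z^2) := by
  simp only [gaussianPDFReal, NNReal.coe_one, mul_one, sub_zero]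
  congr 1
  ring

lemma gauss_integrable_exp (c : ℝ) :
    Integrable (fun z => Real.exp (c * z)) (gaussianReal 0 1) := by
  rw [gauss_integrable_iff]
  have h1 : Integrable (fun z : ℝ => Real.exp (-(1/2 : ℝ) * (z - c)^2)) volume :=
    (integrable_exp_neg_mul_sq (by norm_num)).comp_sub_right c
  have h2 := (h1.const_mul ((Real.sqrt (2 * π))⁻¹ * Real.exp (c^2/2)))
  refine h2.congr (ae_of_all _ fun z => ?_)
  dsimp only
  rw [pdf_eq]
  rw [mul_assoc, ← Real.exp_add, mul_assoc, ← Real.exp_add]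
  congr 1
  ring

lemma int_Ioi : ∫ x in Ioi (0:ℝ), x * Real.exp (-(1/2) * x^2) = 1 := by
  have hderiv : ∀ x ∈ Ioi (0:ℝ),
      HasDerivAt (fun y : ℝ => -Real.exp (-(1/2) * y^2))
        (x * Real.exp (-(1/2) * x^2)) x := by
    intro x _
    have h : HasDerivAt (fun y : ℝ => -(1/2 : ℝ) * y^2) (-x) x := by
      simpa using ((hasDerivAt_pow 2 x).const_mul (-(1/2 : ℝ)))
    have : HasDerivAt (fun y : ℝ => -Real.exp (-(1/2) * y^2)) _ x := (h.exp).neg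
    convert this using 1
    ring
  have hcont : ContinuousWithinAt (fun y : ℝ => -Real.exp (-(1/2) * y^2)) (Ici 0) 0 :=
    (Continuous.continuousWithinAt (by continuity))
  have hint : IntegrableOn (fun x : ℝ => x * Real.exp (-(1/2) * x^2)) (Ioi 0) :=
    (integrable_mul_exp_neg_mul_sq (by norm_num : (0:ℝ) < 1/2)).integrableOn
  have htend : Tendsto (fun y : ℝ => -Real.exp (-(1/2) * y^2)) atTop (nhds 0) := by
    rw [← neg_zero]
    refine Tendsto.neg ?_
    refine Real.tendsto_exp_atBot.comp ?_
    have h1 : Tendsto (fun y : ℝ => y^2) atTop atTop := tendsto_pow_atTop (by norm_num)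
    have h2 := h1.const_mul_atTop (show (0:ℝ) < 1/2 by norm_num)
    exact (tendsto_neg_atTop_atBot.comp h2).congr fun y => by simp
  have := integral_Ioi_of_hasDerivAt_of_tendsto hcont hderiv hint htend
  simp at this
  convert this using 1 <;> simp

lemma sqrt_two_div_pi : Real.sqrt (2 / π) = 2 * (Real.sqrt (2 * π))⁻¹ := by
  have h2π : (0:ℝ) < 2 * π := by positivity
  have hs : (2 * (Real.sqrt (2 * π))⁻¹)^2 = 2/π := by
    rw [mul_pow, inv_pow, Real.sq_sqrt h2π.le]
    field_simp
  rw [← hs, Real.sqrt_sq (by positivity)]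

lemma gauss_int_abs : ∫ z, |z| ∂(gaussianReal 0 1) = Real.sqrt (2 / π) := by
  rw [gauss_int_eq]
  have h : ∀ z : ℝ, gaussianPDFReal 0 1 z * |z|
      = (fun t => (Real.sqrt (2 * π))⁻¹ * Real.exp (-(1/2) * t^2) * t) |z| := by
    intro z
    rw [pdf_eq]
    simp [neg_mul, sq_abs]
  simp_rw [h]
  rw [integral_comp_abs (f := fun t => (Real.sqrt (2 * π))⁻¹ * Real.exp (-(1/2) * t^2) * t)]
  have : ∀ x : ℝ, (Real.sqrt (2 * π))⁻¹ * Real.exp (-(1/2) * x^2) * x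
      = (Real.sqrt (2 * π))⁻¹ * (x * Real.exp (-(1/2) * x^2)) := fun x => by ring
  simp_rw [this, integral_const_mul, int_Ioi, mul_one]
  rw [sqrt_two_div_pi]

lemma gauss_integrable_bound (A σ : ℝ) (hA : 0 ≤ A) (hσ : 0 < σ) :
    Integrable (fun z => (A + σ*|z|) * Real.exp (A + σ*|z|)) (gaussianReal 0 1) := by
  have hmaj : Integrable (fun z => (A+σ)*Real.exp A *
      (Real.exp ((σ+1)*z) + Real.exp (-(σ+1)*z))) (gaussianReal 0 1) :=
    ((gauss_integrable_exp (σ+1)).add (gauss_integrable_exp (-(σ+1)))).const_mul _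
  refine hmaj.mono ?_ (ae_of_all _ fun z => ?_)
  · exact (((continuous_const.add (continuous_const.mul continuous_abs)).mul
      ((continuous_const.add (continuous_const.mul continuous_abs)).rexp))).aestronglyMeasurable
  · have e1 : |z| ≤ Real.exp |z| := by linarith [Real.add_one_le_exp |z|]
    have e2 : (1:ℝ) ≤ Real.exp |z| := Real.one_le_exp (abs_nonneg z)
    have key1 : A + σ*|z| ≤ (A+σ) * Real.exp |z| := by nlinarith
    have key3 : Real.exp |z| * Real.exp (σ*|z|) = Real.exp ((σ+1)*|z|) := by
      rw [← Real.exp_add]; congr 1; ring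
    have key4 : Real.exp ((σ+1)*|z|) ≤ Real.exp ((σ+1)*z) + Real.exp (-(σ+1)*z) := by
      rcases abs_cases z with ⟨h, _⟩ | ⟨h, _⟩ <;> rw [h]
      · exact le_add_of_nonneg_right (Real.exp_pos _).le
      · rw [show (σ+1)*(-z) = -(σ+1)*z by ring]
        exact le_add_of_nonneg_left (Real.exp_pos _).le
    rw [Real.norm_eq_abs, Real.norm_eq_abs,
      abs_of_nonneg (show (0:ℝ) ≤ (A + σ*|z|) * Real.exp (A + σ*|z|) by positivity),
      abs_of_nonneg (show (0:ℝ) ≤ (A+σ)*Real.exp A *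
        (Real.exp ((σ+1)*z) + Real.exp (-(σ+1)*z)) by positivity)]
    calc (A + σ*|z|) * Real.exp (A + σ*|z|)
        ≤ ((A+σ) * Real.exp |z|) * Real.exp (A + σ*|z|) :=
          mul_le_mul_of_nonneg_right key1 (Real.exp_pos _).le
      _ = (A+σ) * Real.exp A * (Real.exp |z| * Real.exp (σ*|z|)) := by
          rw [Real.exp_add]; ring
      _ = (A+σ) * Real.exp A * Real.exp ((σ+1)*|z|) := by rw [key3]
      _ ≤ (A+σ) * Real.exp A * (Real.exp ((σ+1)*z) + Real.exp (-(σ+1)*z)) :=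
          mul_le_mul_of_nonneg_left key4 (by positivity)

lemma sqrt_tendsto : Tendsto Real.sqrt (nhdsWithin 0 (Ioi (0:ℝ))) (nhdsWithin 0 {(0:ℝ)}ᶜ) := by
  refine tendsto_nhdsWithin_of_tendsto_nhds_of_eventually_within _ ?_ ?_
  · exact (Real.continuous_sqrt.tendsto' 0 0 Real.sqrt_zero).mono_left nhdsWithin_le_nhds
  · filter_upwards [self_mem_nhdsWithin] with u hu
    simp only [mem_compl_iff, mem_singleton_iff]
    exact Real.sqrt_ne_zero'.mpr hu

lemma slope_tendsto (a c : ℝ) :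
    Tendsto (fun u : ℝ => (Real.exp (a * u + c * Real.sqrt u) - 1) / Real.sqrt u)
      (nhdsWithin 0 (Ioi (0:ℝ))) (nhds c) := by
  have hd : HasDerivAt (fun v : ℝ => Real.exp (a * v^2 + c * v)) c 0 := by
    have h1 : HasDerivAt (fun v : ℝ => a * v^2 + c * v) c 0 := by
      have := ((hasDerivAt_pow 2 (0:ℝ)).const_mul a).add ((hasDerivAt_id (0:ℝ)).const_mul c)
      simpa [Pi.add_def] using this
    have := h1.exp
    simpa using this
  have hslope := hasDerivAt_iff_tendsto_slope.mp hd
  have hcomp := hslope.comp sqrt_tendsto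
  refine hcomp.congr' ?_
  filter_upwards [self_mem_nhdsWithin] with u hu
  have hu' : (0:ℝ) < u := hu
  simp only [Function.comp_apply, slope_def_field]
  have h0 : Real.exp (a * 0^2 + c * 0) = 1 := by norm_num
  rw [Real.sq_sqrt hu'.le, h0, sub_zero]

lemma wf_limit (μ r σ x z : ℝ) (hσ : 0 < σ) (hx0 : 0 < x) (hx1 : x < 1) :
    Tendsto (fun u : ℝ => (1 / Real.sqrt u) * |wealthFrac μ r σ u x z - x|)
      (nhdsWithin 0 (Ioi (0:ℝ))) (nhds (σ*x*(1-x)*|z|)) := by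
  have hA : ∀ u, 0 < stochExp μ r σ u z := fun u => Real.exp_pos _
  have hD : ∀ u, 0 < x * stochExp μ r σ u z + 1 - x := fun u => by nlinarith [hA u]
  have hYx : ∀ u, wealthFrac μ r σ u x z - x
      = x*(1-x)*(stochExp μ r σ u z - 1) / (x*stochExp μ r σ u z + 1 - x) := fun u => by
    have h := (hD u).ne'
    unfold wealthFrac
    field_simp
    ring
  have hg : Tendsto (fun u => (stochExp μ r σ u z - 1)/Real.sqrt u)
      (nhdsWithin 0 (Ioi (0:ℝ))) (nhds (σ*z)) := by
    refine (slope_tendsto (μ - r - σ^2/2) (σ*z)).congr fun u => ?_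
    unfold stochExp
    rw [show (μ - r - σ^2/2)*u + σ*z*Real.sqrt u
      = (μ - r - σ^2/2)*u + σ*Real.sqrt u*z by ring]
  have hAt : Tendsto (fun u => stochExp μ r σ u z) (nhdsWithin 0 (Ioi (0:ℝ))) (nhds 1) := by
    have hc : Continuous (fun u : ℝ => Real.exp ((μ - r - σ^2/2)*u + σ*Real.sqrt u*z)) := by
      fun_prop
    have h2 := hc.tendsto' 0 1 (by norm_num)
    exact h2.mono_left nhdsWithin_le_nhds
  have hDt : Tendsto (fun u => x * stochExp μ r σ u z + 1 - x)
      (nhdsWithin 0 (Ioi (0:ℝ))) (nhds 1) := by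
    have h2 := (hAt.const_mul x).add_const (1 - x)
    convert h2 using 2 <;> ring
  have hmain : Tendsto (fun u => (x*(1-x)) * ((stochExp μ r σ u z - 1)/Real.sqrt u)
      * (x*stochExp μ r σ u z + 1 - x)⁻¹)
      (nhdsWithin 0 (Ioi (0:ℝ))) (nhds ((x*(1-x)) * (σ*z) * 1⁻¹)) :=
    (hg.const_mul _).mul (hDt.inv₀ one_ne_zero)
  have habs := (continuous_abs.tendsto _).comp hmain
  have hval : |x*(1-x) * (σ*z) * 1⁻¹| = σ*x*(1-x)*|z| := by
    rw [inv_one, mul_one, abs_mul, abs_of_pos (by nlinarith : (0:ℝ) < x*(1-x)), abs_mul,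
      abs_of_pos hσ]
    ring
  rw [hval] at habs
  refine habs.congr' ?_
  filter_upwards [self_mem_nhdsWithin] with u hu
  have hu' : (0:ℝ) < u := hu
  have hs : (0:ℝ) < Real.sqrt u := Real.sqrt_pos.mpr hu'
  simp only [Function.comp_apply]
  have heq : x*(1-x)*((stochExp μ r σ u z - 1)/Real.sqrt u) * (x*stochExp μ r σ u z + 1 - x)⁻¹
      = (x*(1-x)*(stochExp μ r σ u z - 1)/(x*stochExp μ r σ u z + 1 - x)) * (1/Real.sqrt u) := by
    ring
  rw [heq, abs_mul, abs_of_pos (by positivity : (0:ℝ) < 1/Real.sqrt u), ← hYx u]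
  ring

lemma wf_bound (μ r σ x : ℝ) (hσ : 0 < σ) (hx0 : 0 < x) (hx1 : x < 1) (u z : ℝ)
    (hu0 : 0 < u) (hu1 : u ≤ 1) :
    (1 / Real.sqrt u) * |wealthFrac μ r σ u x z - x|
      ≤ (|μ - r - σ^2/2| + σ*|z|) * Real.exp (|μ - r - σ^2/2| + σ*|z|) := by
  set a : ℝ := μ - r - σ^2/2 with ha
  have hA : 0 < stochExp μ r σ u z := Real.exp_pos _
  have hD : 0 < x * stochExp μ r σ u z + 1 - x := by nlinarith
  have hYx : wealthFrac μ r σ u x z - x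
      = x*(1-x)*(stochExp μ r σ u z - 1) / (x*stochExp μ r σ u z + 1 - x) := by
    have h := hD.ne'
    unfold wealthFrac
    field_simp
    ring
  have hs : (0:ℝ) < Real.sqrt u := Real.sqrt_pos.mpr hu0
  have hs1 : Real.sqrt u ≤ 1 := by
    rw [show (1:ℝ) = Real.sqrt 1 by simp]
    exact Real.sqrt_le_sqrt hu1
  have h1 : |wealthFrac μ r σ u x z - x| ≤ |stochExp μ r σ u z - 1| := by
    rw [hYx, abs_div, abs_of_pos hD, div_le_iff₀ hD]
    have h2 : |x*(1-x)*(stochExp μ r σ u z - 1)| = x*(1-x)*|stochExp μ r σ u z - 1| := by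
      rw [abs_mul, abs_of_pos (by nlinarith : (0:ℝ) < x*(1-x))]
    rw [h2]
    nlinarith [abs_nonneg (stochExp μ r σ u z - 1),
      mul_nonneg (abs_nonneg (stochExp μ r σ u z - 1))
        (by nlinarith : (0:ℝ) ≤ x*stochExp μ r σ u z + (1-x)^2)]
  set t : ℝ := a*u + σ*Real.sqrt u*z with ht
  set T : ℝ := (|a|)*u + σ*Real.sqrt u*|z| with hT
  have habs : |t| ≤ T := by
    rw [ht, hT]
    refine (abs_add_le _ _).trans ?_
    rw [abs_mul, abs_mul, abs_mul, abs_of_pos hσ, abs_of_pos hs, abs_of_pos hu0]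
  have hT0 : 0 ≤ T := le_trans (abs_nonneg t) habs
  have h2 : |stochExp μ r σ u z - 1| ≤ T * Real.exp T := by
    refine (myAbsExp t).trans ?_
    exact mul_le_mul habs (Real.exp_le_exp.mpr habs) (Real.exp_pos _).le hT0
  calc (1 / Real.sqrt u) * |wealthFrac μ r σ u x z - x|
      ≤ (1 / Real.sqrt u) * (T * Real.exp T) := by
        refine mul_le_mul_of_nonneg_left (h1.trans h2) (by positivity)
    _ = ((|a|)*Real.sqrt u + σ*|z|) * Real.exp T := by
        have hss : Real.sqrt u * Real.sqrt u = u := Real.mul_self_sqrt hu0.le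
        rw [one_div, inv_mul_eq_div, div_eq_iff hs.ne', hT]
        linear_combination (-(|a| * Real.exp T)) * hss
    _ ≤ (|a| + σ*|z|) * Real.exp (|a| + σ*|z|) := by
        have e1 : (|a|)*Real.sqrt u + σ*|z| ≤ |a| + σ*|z| := by
          nlinarith [abs_nonneg a]
        have e2 : T ≤ |a| + σ*|z| := by
          rw [hT]
          nlinarith [mul_le_mul_of_nonneg_left hu1 (abs_nonneg a),
            mul_le_mul_of_nonneg_left hs1 (mul_nonneg hσ.le (abs_nonneg z))]
        exact mul_le_mul e1 (Real.exp_le_exp.mpr e2) (Real.exp_pos _).le (by positivity)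

end Aux

/-- Lemma 5.5 (v), limit part: the exact small-time rate
`E[|Y_s^{(t,x)} - x|]/√(s-t) → σ √(2/π) x(1-x)` as `u = s - t ↓ 0`. -/
theorem wealthFrac_increment_small_time_limit (μ r σ : ℝ) (hσ : 0 < σ) :
    ∀ x ∈ Ioo (0:ℝ) 1,
      Tendsto (fun u : ℝ =>
          (1 / Real.sqrt u) * ∫ z, |wealthFrac μ r σ u x z - x| ∂(gaussianReal 0 1))
        (nhdsWithin 0 (Ioi 0))
        (nhds (σ * Real.sqrt (2 / Real.pi) * x * (1 - x))) := by
  intro x hx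
  obtain ⟨hx0, hx1⟩ := hx
  have hlim : ∫ z, σ*x*(1-x)*|z| ∂(gaussianReal 0 1) = σ * Real.sqrt (2/π) * x * (1-x) := by
    rw [integral_const_mul, gauss_int_abs]
    ring
  rw [← hlim]
  have heq : ∀ u : ℝ, (1/Real.sqrt u) * ∫ z, |wealthFrac μ r σ u x z - x| ∂(gaussianReal 0 1)
      = ∫ z, (1/Real.sqrt u) * |wealthFrac μ r σ u x z - x| ∂(gaussianReal 0 1) :=
    fun u => (integral_const_mul _ _).symm
  refine Tendsto.congr (fun u => (heq u).symm) ?_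
  refine tendsto_integral_filter_of_dominated_convergence
    (fun z => (|μ - r - σ^2/2| + σ*|z|) * Real.exp (|μ - r - σ^2/2| + σ*|z|))
    ?_ ?_ ?_ ?_
  · refine Eventually.of_forall fun u => ?_
    have hc : Continuous (fun z => wealthFrac μ r σ u x z) := by
      unfold wealthFrac stochExp
      refine Continuous.div (by fun_prop) (by fun_prop) fun z => ?_
      have := Real.exp_pos ((μ - r - σ^2/2)*u + σ*Real.sqrt u*z)
      nlinarith
    exact (continuous_const.mul ((hc.sub continuous_const).abs)).aestronglyMeasurable
  · filter_upwards [Ioc_mem_nhdsGT_of_mem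
      (show (0:ℝ) ∈ Ico (0:ℝ) 1 by constructor <;> norm_num)] with u hu
    refine ae_of_all _ fun z => ?_
    rw [Real.norm_eq_abs, abs_of_nonneg (by positivity)]
    exact wf_bound μ r σ x hσ hx0 hx1 u z hu.1 hu.2
  · exact gauss_integrable_bound _ σ (abs_nonneg _) hσ
  · exact ae_of_all _ fun z => wf_limit μ r σ x z hσ hx0 hx1
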